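/- arXiv:1008.4550 — 4 statements merged into one kernel-verified Lean document; each statement's English description precedes it below -/
import Mathlib

section
/- Let f ∈ L^2(Q) on Q = [0,π]×[0,2π] with Fourier coefficients f̂(j,k) (with respect to the basis e^{i2jx}e^{ikt}, (j,k) ∈ ℤ×ℤ) satisfying f̂(j,k) = 0 whenever 2j = ±k. Define w by ŵ(j,k) = f̂(j,k)/(4j² − k²) for 2j ≠ ±k and ŵ(j,k) = 0 otherwise. Then w ∈ H¹(Q) and ‖w‖²_{H¹} ≤ ‖f‖²_{L²}. -/
lemma key_int (j k : ℤ) (h1 : 2 * j ≠ k) (h2 : 2 * j ≠ -k) :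
    4 * j ^ 2 + k ^ 2 ≤ (4 * j ^ 2 - k ^ 2) ^ 2 := by
  have ha : (2 * j - k) ^ 2 ≥ 1 := by
    have : 2 * j - k ≠ 0 := sub_ne_zero.mpr h1
    have h := Int.one_le_abs this
    nlinarith [sq_abs (2 * j - k)]
  have hb : (2 * j + k) ^ 2 ≥ 1 := by
    have : 2 * j + k ≠ 0 := by
      intro h
      exact h2 (by linarith)
    have h := Int.one_le_abs this
    nlinarith [sq_abs (2 * j + k)]
  nlinarith [mul_nonneg (by linarith : (0:ℤ) ≤ (2*j-k)^2 - 1) (by linarith : (0:ℤ) ≤ (2*j+k)^2 - 1)]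

lemma key_bound (fh w : ℤ × ℤ → ℂ)
    (hw : ∀ j k : ℤ, 2 * j ≠ k → 2 * j ≠ -k →
      w (j, k) = fh (j, k) / ((4 * j ^ 2 - k ^ 2 : ℤ) : ℂ))
    (hw0 : ∀ j k : ℤ, (2 * j = k ∨ 2 * j = -k) → w (j, k) = 0)
    (jk : ℤ × ℤ) :
    ((4 * jk.1 ^ 2 + jk.2 ^ 2 : ℤ) : ℝ) * ‖w jk‖ ^ 2 ≤ ‖fh jk‖ ^ 2 := by
  obtain ⟨j, k⟩ := jk
  by_cases h1 : 2 * j = k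
  · simp [hw0 j k (Or.inl h1), sq_nonneg]
  by_cases h2 : 2 * j = -k
  · simp [hw0 j k (Or.inr h2), sq_nonneg]
  have hd : (4 * j ^ 2 - k ^ 2 : ℤ) ≠ 0 := by
    intro h
    have : (2 * j - k) * (2 * j + k) = 0 := by ring_nf; linarith
    rcases mul_eq_zero.mp this with h | h
    · exact h1 (by linarith)
    · exact h2 (by linarith)
  rw [hw j k h1 h2]
  rw [norm_div]
  have hdR : (0:ℝ) < ‖((4 * j ^ 2 - k ^ 2 : ℤ) : ℂ)‖ := by
    simp only [Complex.norm_intCast]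
    exact_mod_cast abs_pos.mpr hd
  have hnorm : ‖((4 * j ^ 2 - k ^ 2 : ℤ) : ℂ)‖ ^ 2 = ((4 * j ^ 2 - k ^ 2 : ℤ)^2 : ℝ) := by
    simp only [Complex.norm_intCast]
    push_cast
    rw [sq_abs]
  rw [div_pow, hnorm]
  rw [div_eq_inv_mul, ← mul_assoc]
  have hkey : ((4 * j ^ 2 + k ^ 2 : ℤ) : ℝ) ≤ ((4 * j ^ 2 - k ^ 2 : ℤ)^2 : ℝ) := by
    exact_mod_cast key_int j k h1 h2
  have hpos : (0:ℝ) < (((4 * j ^ 2 - k ^ 2 : ℤ):ℝ)^2) := by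
    have : ((4 * j ^ 2 - k ^ 2 : ℤ):ℝ) ≠ 0 := by exact_mod_cast hd
    positivity
  have h3 : ((4 * j ^ 2 + k ^ 2 : ℤ) : ℝ) * (((4 * j ^ 2 - k ^ 2 : ℤ):ℝ)^2)⁻¹ ≤ 1 := by
    rw [mul_inv_le_iff₀ hpos, one_mul]
    push_cast at hkey ⊢
    linarith
  calc ((4 * j ^ 2 + k ^ 2 : ℤ) : ℝ) * (((4 * j ^ 2 - k ^ 2 : ℤ):ℝ)^2)⁻¹ * ‖fh (j,k)‖ ^ 2
      ≤ 1 * ‖fh (j,k)‖ ^ 2 := by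
        apply mul_le_mul_of_nonneg_right h3 (sq_nonneg _)
    _ = ‖fh (j,k)‖ ^ 2 := one_mul _

/-- H¹ estimate for the inverse d'Alembertian with periodic boundary conditions. -/
theorem stmt_0 (fh : ℤ × ℤ → ℂ)
    (hL2 : Summable fun jk : ℤ × ℤ => ‖fh jk‖ ^ 2)
    (hker : ∀ j k : ℤ, (2 * j = k ∨ 2 * j = -k) → fh (j, k) = 0)
    (w : ℤ × ℤ → ℂ)
    (hw : ∀ j k : ℤ, 2 * j ≠ k → 2 * j ≠ -k →
      w (j, k) = fh (j, k) / ((4 * j ^ 2 - k ^ 2 : ℤ) : ℂ))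
    (hw0 : ∀ j k : ℤ, (2 * j = k ∨ 2 * j = -k) → w (j, k) = 0) :
    Summable (fun jk : ℤ × ℤ => ((4 * jk.1 ^ 2 + jk.2 ^ 2 : ℤ) : ℝ) * ‖w jk‖ ^ 2) ∧
    ∑' jk : ℤ × ℤ, ((4 * jk.1 ^ 2 + jk.2 ^ 2 : ℤ) : ℝ) * ‖w jk‖ ^ 2 ≤
      ∑' jk : ℤ × ℤ, ‖fh jk‖ ^ 2 := by
  have hnn : ∀ jk : ℤ × ℤ, 0 ≤ ((4 * jk.1 ^ 2 + jk.2 ^ 2 : ℤ) : ℝ) * ‖w jk‖ ^ 2 := by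
    intro jk
    apply mul_nonneg _ (sq_nonneg _)
    have : (0:ℤ) ≤ 4 * jk.1 ^ 2 + jk.2 ^ 2 := by positivity
    exact_mod_cast this
  have hle := key_bound fh w hw hw0
  have hsum : Summable (fun jk : ℤ × ℤ => ((4 * jk.1 ^ 2 + jk.2 ^ 2 : ℤ) : ℝ) * ‖w jk‖ ^ 2) :=
    Summable.of_nonneg_of_le hnn hle hL2
  exact ⟨hsum, Summable.tsum_le_tsum hle hsum hL2⟩
end

section
/- Let u: ℝ² → ℂ be a function with absolutely convergent Fourier series u(x,t) = Σ_{j≥0,k≥0} û(j,k) e^{i2jx}e^{ikt} (only nonnegative frequencies in both variables). If u is Hölder continuous of exponent γ ∈ (0,1], then for every 0 < γ' < γ, u belongs to the Sobolev space H^{γ'}, i.e. Σ_{j,k≥0} (2|j|+|k|)^{2γ'} |û(j,k)|² < ∞, with ‖u‖²_{H^{γ'}} ≤ c(γ−γ')^{-1} ‖u‖²_{C^{0,γ}}. -/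
/-!
Put `h_m = (2π/3) 2^{-m}`. The difference `u(x + h_m, t + h_m) - u(x, t)` has Fourier coefficients
`û(j,k) (e^{i(2j+k)h_m} - 1)` and is bounded by `K h_m^γ`. A bounded, absolutely convergent
trigonometric series has `ℓ²` norm of coefficients at most its sup norm (Bessel's inequality,
obtained from the orthogonality of characters sampled on a fine grid). On the dyadic block
`2^m ≤ 2j + k ≤ 2^{m+1}` the phase `(2j+k) h_m` lies in `[2π/3, 4π/3]`, so
`|e^{i(2j+k)h_m} - 1|² ≥ 3` and the block carries `ℓ²` mass at most `K² h_m^{2γ} / 3`.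
Weighting by `(2^{m+1})^{2γ'}` leaves a geometric series in `2^{-2m(γ-γ')}`, whose sum is
`O((γ - γ')⁻¹)`.
-/

open Real Complex

open Finset Filter Topology ComplexConjugate

open scoped NNReal

/-- The series of the theorem is `∑ û(j,k) torusChar (j, k) (2x) t`. -/
noncomputable def torusChar (jk : ℤ × ℤ) (x t : ℝ) : ℂ := exp (I * (jk.1 * x + jk.2 * t))

lemma torusChar_eq_exp_I_mul_ofReal (jk : ℤ × ℤ) (x t : ℝ) :
    torusChar jk x t = exp (I * ((jk.1 * x + jk.2 * t : ℝ) : ℂ)) := by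
  simp [torusChar]

lemma norm_torusChar (jk : ℤ × ℤ) (x t : ℝ) : ‖torusChar jk x t‖ = 1 := by
  rw [torusChar_eq_exp_I_mul_ofReal, norm_exp_I_mul_ofReal]

lemma torusChar_add (jk : ℤ × ℤ) (x t y s : ℝ) :
    torusChar jk (x + y) (t + s) = torusChar jk y s * torusChar jk x t := by
  simp only [torusChar, ← Complex.exp_add]
  push_cast
  ring_nf

lemma torusChar_mul_conj (jk lm : ℤ × ℤ) (x t : ℝ) :
    torusChar jk x t * conj (torusChar lm x t) = torusChar (jk - lm) x t := by
  rw [torusChar_eq_exp_I_mul_ofReal lm, ← exp_conj, torusChar, torusChar, ← Complex.exp_add]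
  simp only [map_mul, conj_I, conj_ofReal, Prod.fst_sub, Prod.snd_sub]
  push_cast
  ring_nf

lemma torusChar_eq_mul (jk : ℤ × ℤ) (x t : ℝ) :
    torusChar jk x t = exp (I * (jk.1 * x)) * exp (I * (jk.2 * t)) := by
  rw [torusChar, ← Complex.exp_add, mul_add]

lemma sum_range_exp_two_pi_I_mul_div (L : ℕ) (d : ℤ) (hd : |d| < L) :
    ∑ p ∈ range L, exp (I * (d * (2 * π * p / L : ℝ))) = if d = 0 then (L : ℂ) else 0 := by
  have hL : L ≠ 0 := by have := abs_nonneg d; omega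
  have hζ := isPrimitiveRoot_exp L hL
  have hterm : ∀ p : ℕ, exp (I * (d * (2 * π * p / L : ℝ))) = (exp (2 * π * I / L) ^ d) ^ p := by
    intro p
    rw [← exp_int_mul, ← Complex.exp_nat_mul]
    congr 1
    push_cast
    ring
  simp_rw [hterm]
  split_ifs with hd0
  · simp [hd0]
  · have hne : exp (2 * π * I / L) ^ d ≠ 1 := by
      rw [Ne, hζ.zpow_eq_one_iff_dvd]
      exact fun hdvd => hd0 (Int.eq_zero_of_abs_lt_dvd hdvd hd)
    have hpow : (exp (2 * π * I / L) ^ d) ^ L = 1 := by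
      rw [← zpow_natCast, ← zpow_mul, mul_comm d, zpow_mul, zpow_natCast, hζ.pow_eq_one, one_zpow]
    rw [geom_sum_eq hne, hpow, sub_self, zero_div]

lemma sum_sample_torusChar (L : ℕ) (d : ℤ × ℤ) (hd₁ : |d.1| < L) (hd₂ : |d.2| < L) :
    ∑ p ∈ range L, ∑ q ∈ range L, torusChar d (2 * π * p / L) (2 * π * q / L)
      = if d = 0 then (L : ℂ) ^ 2 else 0 := by
  rcases d with ⟨d₁, d₂⟩
  simp_rw [torusChar_eq_mul, ← sum_mul_sum]
  rw [sum_range_exp_two_pi_I_mul_div L d₁ hd₁, sum_range_exp_two_pi_I_mul_div L d₂ hd₂]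
  by_cases h₁ : d₁ = 0 <;> by_cases h₂ : d₂ = 0 <;> simp [h₁, h₂, sq]

lemma sum_sample_norm_sq (a : ℤ × ℤ → ℂ) (B : Finset (ℤ × ℤ)) (L : ℕ)
    (hL : ∀ jk ∈ B, ∀ lm ∈ B, |jk.1 - lm.1| < L ∧ |jk.2 - lm.2| < L) :
    ∑ p ∈ range L, ∑ q ∈ range L,
        ‖∑ jk ∈ B, a jk * torusChar jk (2 * π * p / L) (2 * π * q / L)‖ ^ 2
      = L ^ 2 * ∑ jk ∈ B, ‖a jk‖ ^ 2 := by
  apply ofReal_injective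
  push_cast
  have hterm : ∀ (jk lm : ℤ × ℤ) (x t : ℝ), a jk * torusChar jk x t * conj (a lm * torusChar lm x t)
      = a jk * conj (a lm) * torusChar (jk - lm) x t := fun jk lm x t => by
    rw [map_mul, mul_mul_mul_comm, torusChar_mul_conj]
  simp_rw [← mul_conj', map_sum, sum_mul_sum, hterm, sum_comm (s := range L) (t := B), ← mul_sum]
  rw [mul_sum]
  refine sum_congr rfl fun jk hjk => ?_
  have hsample : ∀ lm ∈ B, ∑ p ∈ range L, ∑ q ∈ range L,
      torusChar (jk - lm) (2 * π * p / L) (2 * π * q / L) = if jk - lm = 0 then (L : ℂ) ^ 2 else 0 :=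
    fun lm hlm => sum_sample_torusChar L _ (by simpa using (hL jk hjk lm hlm).1)
      (by simpa using (hL jk hjk lm hlm).2)
  rw [sum_eq_single_of_mem jk hjk]
  · rw [hsample jk hjk, if_pos (sub_self jk), mul_conj']
    ring
  · intro lm hlm hne
    rw [hsample lm hlm, if_neg (sub_ne_zero.mpr hne.symm), mul_zero]

lemma sum_norm_sq_le_sq_of_norm_sample_le (a : ℤ × ℤ → ℂ) (B : Finset (ℤ × ℤ)) {L : ℕ}
    (hL₀ : 0 < L) (hL : ∀ jk ∈ B, ∀ lm ∈ B, |jk.1 - lm.1| < L ∧ |jk.2 - lm.2| < L) {C : ℝ}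
    (hC : ∀ p q : ℕ, ‖∑ jk ∈ B, a jk * torusChar jk (2 * π * p / L) (2 * π * q / L)‖ ≤ C) :
    ∑ jk ∈ B, ‖a jk‖ ^ 2 ≤ C ^ 2 := by
  have hC₀ : 0 ≤ C := (norm_nonneg _).trans (hC 0 0)
  have hL₀' : (0 : ℝ) < (L : ℝ) ^ 2 := by positivity
  refine le_of_mul_le_mul_left ?_ hL₀'
  calc (L : ℝ) ^ 2 * ∑ jk ∈ B, ‖a jk‖ ^ 2
      = ∑ p ∈ range L, ∑ q ∈ range L,
          ‖∑ jk ∈ B, a jk * torusChar jk (2 * π * p / L) (2 * π * q / L)‖ ^ 2 :=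
        (sum_sample_norm_sq a B L hL).symm
    _ ≤ ∑ p ∈ range L, ∑ q ∈ range L, C ^ 2 :=
        sum_le_sum fun p _ => sum_le_sum fun q _ => pow_le_pow_left₀ (norm_nonneg _) (hC p q) 2
    _ = (L : ℝ) ^ 2 * C ^ 2 := by simp only [sum_const, card_range, nsmul_eq_mul]; ring

lemma exists_sample_size (B : Finset (ℤ × ℤ)) :
    ∃ L : ℕ, 0 < L ∧ ∀ jk ∈ B, ∀ lm ∈ B, |jk.1 - lm.1| < L ∧ |jk.2 - lm.2| < L := by
  refine ⟨2 * B.sup (fun jk => (|jk.1| + |jk.2|).toNat) + 1, by omega, fun jk hjk lm hlm => ?_⟩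
  have hj := le_sup (f := fun jk : ℤ × ℤ => (|jk.1| + |jk.2|).toNat) hjk
  have hl := le_sup (f := fun jk : ℤ × ℤ => (|jk.1| + |jk.2|).toNat) hlm
  grind [abs_sub_lt_iff, le_abs_self, neg_abs_le]

lemma norm_sum_le_add_tsum_compl (a : ℤ × ℤ → ℂ) (ha : Summable fun jk => ‖a jk‖) {M : ℝ}
    (hM : ∀ x t : ℝ, ‖∑' jk, a jk * torusChar jk x t‖ ≤ M) (B : Finset (ℤ × ℤ)) (x t : ℝ) :
    ‖∑ jk ∈ B, a jk * torusChar jk x t‖ ≤ M + ∑' jk : {jk // jk ∉ B}, ‖a jk‖ := by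
  have hnorm : ∀ jk, ‖a jk * torusChar jk x t‖ = ‖a jk‖ := fun jk => by
    rw [norm_mul, norm_torusChar, mul_one]
  have hs : Summable fun jk => ‖a jk * torusChar jk x t‖ := by simpa only [hnorm] using ha
  calc ‖∑ jk ∈ B, a jk * torusChar jk x t‖
      = ‖∑' jk, a jk * torusChar jk x t - ∑' jk : {jk // jk ∉ B}, a jk * torusChar jk x t‖ := by
        rw [← hs.of_norm.sum_add_tsum_subtype_compl B, add_sub_cancel_right]
    _ ≤ ‖∑' jk, a jk * torusChar jk x t‖ + ‖∑' jk : {jk // jk ∉ B}, a jk * torusChar jk x t‖ :=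
        norm_sub_le _ _
    _ ≤ M + ∑' jk : {jk // jk ∉ B}, ‖a jk‖ := by
        refine add_le_add (hM x t) ((norm_tsum_le_tsum_norm (hs.subtype _)).trans_eq ?_)
        simp only [hnorm]

/-- Bessel's inequality: sample the truncation to `B` on a grid fine enough for the discrete
Parseval identity; the truncation error is at most the tail `∑_{∉ B} ‖a‖`, which tends to `0`. -/
theorem sum_norm_sq_le_of_norm_tsum_le (a : ℤ × ℤ → ℂ) (ha : Summable fun jk => ‖a jk‖) {M : ℝ}
    (hM : ∀ x t : ℝ, ‖∑' jk, a jk * torusChar jk x t‖ ≤ M) (F : Finset (ℤ × ℤ)) :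
    ∑ jk ∈ F, ‖a jk‖ ^ 2 ≤ M ^ 2 := by
  have htrunc : ∀ B : Finset (ℤ × ℤ),
      ∑ jk ∈ B, ‖a jk‖ ^ 2 ≤ (M + ∑' jk : {jk // jk ∉ B}, ‖a jk‖) ^ 2 := fun B => by
    obtain ⟨L, hL₀, hL⟩ := exists_sample_size B
    exact sum_norm_sq_le_sq_of_norm_sample_le a B hL₀ hL fun p q =>
      norm_sum_le_add_tsum_compl a ha hM B _ _
  have hlim : Tendsto (fun B : Finset (ℤ × ℤ) => (M + ∑' jk : {jk // jk ∉ B}, ‖a jk‖) ^ 2)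
      atTop (𝓝 (M ^ 2)) := by
    simpa using ((tendsto_tsum_compl_atTop_zero fun jk => ‖a jk‖).const_add M).pow 2
  refine ge_of_tendsto hlim ?_
  filter_upwards [eventually_ge_atTop F] with B hFB
  exact (sum_le_sum_of_subset_of_nonneg hFB fun _ _ _ => sq_nonneg _).trans (htrunc B)

lemma summable_mul_torusChar {a : ℤ × ℤ → ℂ} (ha : Summable fun jk => ‖a jk‖) (x t : ℝ) :
    Summable fun jk => a jk * torusChar jk x t :=
  .of_norm <| by simpa only [norm_mul, norm_torusChar, mul_one] using ha

lemma sum_norm_sq_mul_norm_torusChar_sub_one_sq_le (uh : ℤ × ℤ → ℂ)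
    (ha : Summable fun jk => ‖uh jk‖) (u : ℝ × ℝ → ℂ)
    (hu : ∀ x t : ℝ, u (x, t) = ∑' jk, uh jk * exp (I * (2 * jk.1 * x + jk.2 * t)))
    {K r : ℝ≥0} (hK : HolderWith K r u) (v : ℝ × ℝ) (F : Finset (ℤ × ℤ)) :
    ∑ jk ∈ F, ‖uh jk‖ ^ 2 * ‖torusChar jk (2 * v.1) v.2 - 1‖ ^ 2 ≤ (K * ‖v‖ ^ (r : ℝ)) ^ 2 := by
  have hu' : ∀ x t : ℝ, u (x / 2, t) = ∑' jk, uh jk * torusChar jk x t := fun x t => by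
    rw [hu]
    congr! 3 with jk
    rw [torusChar]
    push_cast
    ring_nf
  set a : ℤ × ℤ → ℂ := fun jk => uh jk * (torusChar jk (2 * v.1) v.2 - 1)
  have ha' : Summable fun jk => ‖a jk‖ := by
    refine .of_nonneg_of_le (fun _ => norm_nonneg _) (fun jk => ?_) (ha.mul_right 2)
    grw [norm_mul, norm_sub_le, norm_torusChar, norm_one, one_add_one_eq_two]
  have hM : ∀ x t : ℝ, ‖∑' jk, a jk * torusChar jk x t‖ ≤ K * ‖v‖ ^ (r : ℝ) := fun x t => by
    have hshift : ∑' jk, a jk * torusChar jk x t = u ((x / 2, t) + v) - u (x / 2, t) := by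
      have hpt : (x / 2, t) + v = ((x + 2 * v.1) / 2, t + v.2) :=
        Prod.ext (by simp only [Prod.fst_add]; ring) rfl
      rw [hpt, hu', hu', ← (summable_mul_torusChar ha _ _).tsum_sub (summable_mul_torusChar ha _ _)]
      refine tsum_congr fun jk => ?_
      rw [torusChar_add]
      ring
    calc ‖∑' jk, a jk * torusChar jk x t‖ = dist (u ((x / 2, t) + v)) (u (x / 2, t)) := by
          rw [hshift, dist_eq_norm]
      _ ≤ K * dist ((x / 2, t) + v) (x / 2, t) ^ (r : ℝ) := hK.dist_le _ _
      _ = K * ‖v‖ ^ (r : ℝ) := by rw [add_comm, dist_add_self_left]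
  simpa only [a, norm_mul, mul_pow] using sum_norm_sq_le_of_norm_tsum_le a ha' hM F

lemma three_le_norm_exp_I_mul_sub_one_sq {θ : ℝ} (h₁ : 2 * π / 3 ≤ θ) (h₂ : θ ≤ 4 * π / 3) :
    3 ≤ ‖exp (I * θ) - 1‖ ^ 2 := by
  have hcos : Real.cos θ ≤ -(1 / 2) := by
    have h : Real.cos (π / 3) ≤ Real.cos |θ - π| :=
      Real.cos_le_cos_of_nonneg_of_le_pi (abs_nonneg _) (by linarith [pi_pos])
        (abs_le.mpr ⟨by linarith, by linarith⟩)
    rw [Real.cos_abs, Real.cos_sub_pi, cos_pi_div_three] at h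
    linarith
  have hsq : ‖exp (I * θ) - 1‖ ^ 2 = 2 - 2 * Real.cos θ := by
    rw [norm_exp_I_mul_ofReal_sub_one, norm_mul, Real.norm_two, Real.norm_eq_abs, mul_pow, sq_abs,
      sin_sq_eq_half_sub, mul_div_cancel₀ θ two_ne_zero]
    ring
  linarith

lemma torusChar_two_mul_self (jk : ℤ × ℤ) (h : ℝ) :
    torusChar jk (2 * h) h = exp (I * ((2 * jk.1 + jk.2) * h : ℝ)) := by
  rw [torusChar_eq_exp_I_mul_ofReal]
  ring_nf

lemma sum_norm_sq_dyadic_block_le (uh : ℤ × ℤ → ℂ)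
    (ha : Summable fun jk => ‖uh jk‖) (u : ℝ × ℝ → ℂ)
    (hu : ∀ x t : ℝ, u (x, t) = ∑' jk, uh jk * exp (I * (2 * jk.1 * x + jk.2 * t)))
    {K r : ℝ≥0} (hK : HolderWith K r u) (m : ℕ) (G : Finset (ℤ × ℤ))
    (hG : ∀ jk ∈ G, (2 : ℝ) ^ m ≤ 2 * jk.1 + jk.2 ∧ 2 * jk.1 + jk.2 ≤ (2 : ℝ) ^ (m + 1)) :
    ∑ jk ∈ G, ‖uh jk‖ ^ 2 ≤ (K * (2 * π / 3 / 2 ^ m) ^ (r : ℝ)) ^ 2 / 3 := by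
  set h : ℝ := 2 * π / 3 / 2 ^ m
  have h₀ : 0 < h := by positivity
  have hmult : ∀ jk ∈ G, 3 ≤ ‖torusChar jk (2 * h) h - 1‖ ^ 2 := fun jk hjk => by
    obtain ⟨hlo, hhi⟩ := hG jk hjk
    have hθ : (2 * jk.1 + jk.2) * h = (2 * jk.1 + jk.2) / 2 ^ m * (2 * π / 3) := by
      simp only [h]; ring
    have hratio : 1 ≤ (2 * jk.1 + jk.2) / (2 : ℝ) ^ m ∧ (2 * jk.1 + jk.2) / (2 : ℝ) ^ m ≤ 2 := by
      rw [one_le_div (by positivity), div_le_iff₀ (by positivity), ← pow_succ']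
      exact ⟨hlo, hhi⟩
    rw [torusChar_two_mul_self, hθ]
    exact three_le_norm_exp_I_mul_sub_one_sq (by nlinarith [pi_pos]) (by nlinarith [pi_pos])
  have hbound := sum_norm_sq_mul_norm_torusChar_sub_one_sq_le uh ha u hu hK (h, h) G
  rw [Prod.norm_mk, max_self, Real.norm_of_nonneg h₀.le] at hbound
  rw [le_div_iff₀ three_pos, sum_mul]
  refine le_trans (sum_le_sum fun jk hjk => ?_) hbound
  exact mul_le_mul_of_nonneg_left (hmult jk hjk) (sq_nonneg _)

lemma sum_le_div_one_sub_of_sum_fiber_le {ι : Type*} (F : Finset ι) (f : ι → ℝ) (idx : ι → ℕ)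
    {C r : ℝ} (hC : 0 ≤ C) (hr₀ : 0 ≤ r) (hr₁ : r < 1)
    (h : ∀ m, ∑ i ∈ F with idx i = m, f i ≤ C * r ^ m) : ∑ i ∈ F, f i ≤ C / (1 - r) := by
  rw [← sum_fiberwise_of_maps_to (fun i hi => mem_image_of_mem idx hi) f]
  calc ∑ m ∈ F.image idx, ∑ i ∈ F with idx i = m, f i
      ≤ ∑ m ∈ F.image idx, C * r ^ m := sum_le_sum fun m _ => h m
    _ ≤ ∑' m, C * r ^ m :=
        ((summable_geometric_of_lt_one hr₀ hr₁).mul_left C).sum_le_tsum _ fun _ _ => by positivity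
    _ = C / (1 - r) := by rw [tsum_mul_left, tsum_geometric_of_lt_one hr₀ hr₁, div_eq_mul_inv]

lemma half_le_one_sub_two_rpow {δ : ℝ} (h₀ : 0 < δ) (h₁ : δ ≤ 1) :
    δ / 2 ≤ 1 - (2 : ℝ) ^ (-(2 * δ)) := by
  set y := 2 * δ * Real.log 2
  have hy : δ ≤ y := by nlinarith [log_two_gt_d9]
  have hr : (2 : ℝ) ^ (-(2 * δ)) * (1 + y) ≤ 1 := by
    rw [rpow_def_of_pos two_pos]
    calc Real.exp (Real.log 2 * -(2 * δ)) * (1 + y)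
        ≤ Real.exp (Real.log 2 * -(2 * δ)) * Real.exp y := by
          gcongr; linarith [Real.add_one_le_exp y]
      _ = 1 := by rw [← Real.exp_add, ← Real.exp_zero]; congr 1; ring
  nlinarith [rpow_pos_of_pos two_pos (-(2 * δ))]

lemma two_pow_succ_rpow_mul_le {γ γ' : ℝ} (hγ'γ : γ' ≤ γ) (hγ : γ ≤ 1) (m : ℕ) :
    ((2 : ℝ) ^ (m + 1)) ^ (2 * γ') * ((2 * π / 3 / 2 ^ m) ^ γ) ^ 2
      ≤ 36 * ((2 : ℝ) ^ (-(2 * (γ - γ')))) ^ m := by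
  have hc₁ : 1 ≤ 2 * π / 3 := by linarith [pi_gt_three]
  have hc₃ : 2 * π / 3 ≤ 3 := by linarith [pi_lt_four]
  have hsplit : ((2 : ℝ) ^ (m + 1)) ^ (2 * γ') * ((2 * π / 3 / 2 ^ m) ^ γ) ^ 2
      = (2 : ℝ) ^ (2 * γ') * ((2 * π / 3) ^ γ) ^ 2 * ((2 : ℝ) ^ (-(2 * (γ - γ')))) ^ m := by
    rw [pow_succ', mul_rpow (by norm_num) (by positivity), div_rpow (by positivity) (by positivity),
      ← rpow_natCast_mul zero_le_two, ← rpow_natCast_mul zero_le_two, ← rpow_mul_natCast zero_le_two,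
      div_pow, ← rpow_mul_natCast zero_le_two, div_eq_mul_inv, ← rpow_neg zero_le_two]
    rw [show -(2 * (γ - γ')) * (m : ℝ) = m * (2 * γ') + -(m * γ * ((2 : ℕ) : ℝ)) by push_cast; ring,
      rpow_add two_pos]
    ring
  rw [hsplit]
  gcongr
  have h2 : (2 : ℝ) ^ (2 * γ') ≤ 4 := by
    calc (2 : ℝ) ^ (2 * γ') ≤ 2 ^ (2 : ℝ) := rpow_le_rpow_of_exponent_le one_le_two (by linarith)
      _ = 4 := by norm_num
  have hc : ((2 * π / 3) ^ γ) ^ 2 ≤ 9 := by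
    calc ((2 * π / 3) ^ γ) ^ 2 ≤ (2 * π / 3) ^ 2 := by
          gcongr; exact rpow_le_self_of_one_le hc₁ hγ
      _ ≤ 9 := by nlinarith
  nlinarith [rpow_nonneg (by positivity : (0:ℝ) ≤ 2 * π / 3) γ]

def freqNorm (jk : ℤ × ℤ) : ℕ := 2 * jk.1.natAbs + jk.2.natAbs

lemma cast_freqNorm (jk : ℤ × ℤ) : ((2 * |jk.1| + |jk.2| : ℤ) : ℝ) = freqNorm jk := by
  simp [freqNorm, Nat.cast_natAbs]

lemma cast_freqNorm_of_nonneg {jk : ℤ × ℤ} (h₁ : 0 ≤ jk.1) (h₂ : 0 ≤ jk.2) :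
    (freqNorm jk : ℝ) = 2 * jk.1 + jk.2 := by
  simp [freqNorm, Nat.cast_natAbs, abs_of_nonneg h₁, abs_of_nonneg h₂]

lemma sum_freqNorm_rpow_mul_norm_sq_fiber_le {γ γ' : ℝ} (hγ'₀ : 0 ≤ γ') (hγ' : γ' < γ)
    (hγ₁ : γ ≤ 1) (uh : ℤ × ℤ → ℂ) (ha : Summable fun jk => ‖uh jk‖) (u : ℝ × ℝ → ℂ)
    (hu : ∀ x t : ℝ, u (x, t) = ∑' jk, uh jk * exp (I * (2 * jk.1 * x + jk.2 * t)))
    {K : ℝ≥0} (hK : HolderWith K γ.toNNReal u) (m : ℕ) (G : Finset (ℤ × ℤ))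
    (hG : ∀ jk ∈ G, 0 ≤ jk.1 ∧ 0 ≤ jk.2 ∧ freqNorm jk ≠ 0 ∧ Nat.log 2 (freqNorm jk) = m) :
    ∑ jk ∈ G, (freqNorm jk : ℝ) ^ (2 * γ') * ‖uh jk‖ ^ 2
      ≤ 12 * (K : ℝ) ^ 2 * ((2 : ℝ) ^ (-(2 * (γ - γ')))) ^ m := by
  have hblock : ∀ jk ∈ G, (2 : ℝ) ^ m ≤ freqNorm jk ∧ (freqNorm jk : ℝ) ≤ 2 ^ (m + 1) :=
    fun jk hjk => by
      obtain ⟨-, -, hn, rfl⟩ := hG jk hjk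
      exact ⟨mod_cast Nat.pow_log_le_self 2 hn, mod_cast (Nat.lt_pow_succ_log_self one_lt_two _).le⟩
  have hsum := sum_norm_sq_dyadic_block_le uh ha u hu hK m G fun jk hjk => by
    obtain ⟨h₁, h₂, -⟩ := hG jk hjk
    rw [← cast_freqNorm_of_nonneg h₁ h₂]
    exact hblock jk hjk
  rw [Real.coe_toNNReal γ (by linarith)] at hsum
  calc ∑ jk ∈ G, (freqNorm jk : ℝ) ^ (2 * γ') * ‖uh jk‖ ^ 2
      ≤ ∑ jk ∈ G, ((2 : ℝ) ^ (m + 1)) ^ (2 * γ') * ‖uh jk‖ ^ 2 := by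
        refine sum_le_sum fun jk hjk => ?_
        gcongr
        exact (hblock jk hjk).2
    _ = ((2 : ℝ) ^ (m + 1)) ^ (2 * γ') * ∑ jk ∈ G, ‖uh jk‖ ^ 2 := by rw [mul_sum]
    _ ≤ ((2 : ℝ) ^ (m + 1)) ^ (2 * γ') * ((K * (2 * π / 3 / 2 ^ m) ^ γ) ^ 2 / 3) := by gcongr
    _ = (K : ℝ) ^ 2 / 3 * (((2 : ℝ) ^ (m + 1)) ^ (2 * γ') * ((2 * π / 3 / 2 ^ m) ^ γ) ^ 2) := by ring
    _ ≤ (K : ℝ) ^ 2 / 3 * (36 * ((2 : ℝ) ^ (-(2 * (γ - γ')))) ^ m) :=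
        mul_le_mul_of_nonneg_left (two_pow_succ_rpow_mul_le hγ'.le hγ₁ m) (by positivity)
    _ = 12 * (K : ℝ) ^ 2 * ((2 : ℝ) ^ (-(2 * (γ - γ')))) ^ m := by ring

lemma sum_freqNorm_rpow_mul_norm_sq_le {γ γ' : ℝ} (hγ₁ : γ ≤ 1) (hγ'₀ : 0 < γ')
    (hγ' : γ' < γ) (uh : ℤ × ℤ → ℂ) (ha : Summable fun jk => ‖uh jk‖)
    (hsupp : ∀ j k : ℤ, (j < 0 ∨ k < 0) → uh (j, k) = 0) (u : ℝ × ℝ → ℂ)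
    (hu : ∀ x t : ℝ, u (x, t) = ∑' jk, uh jk * exp (I * (2 * jk.1 * x + jk.2 * t)))
    {K : ℝ≥0} (hK : HolderWith K γ.toNNReal u) (F : Finset (ℤ × ℤ)) :
    ∑ jk ∈ F, (freqNorm jk : ℝ) ^ (2 * γ') * ‖uh jk‖ ^ 2 ≤ 24 / (γ - γ') * (K : ℝ) ^ 2 := by
  have hδ : 0 < γ - γ' := sub_pos.mpr hγ'
  have hr₀ : (0 : ℝ) ≤ 2 ^ (-(2 * (γ - γ'))) := by positivity
  have hr := half_le_one_sub_two_rpow hδ (by linarith)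
  rw [← sum_filter_of_ne (p := fun jk => uh jk ≠ 0 ∧ freqNorm jk ≠ 0) fun jk _ hne =>
    ⟨fun h => hne (by simp [h]), fun h => hne (by simp [h, hγ'₀.ne'])⟩]
  calc _ ≤ 12 * (K : ℝ) ^ 2 / (1 - 2 ^ (-(2 * (γ - γ')))) := by
        refine sum_le_div_one_sub_of_sum_fiber_le _ _ (fun jk => Nat.log 2 (freqNorm jk))
          (by positivity) hr₀ (by linarith) fun m => ?_
        refine sum_freqNorm_rpow_mul_norm_sq_fiber_le hγ'₀.le hγ' hγ₁ uh ha u hu hK m _ ?_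
        simp only [mem_filter]
        rintro ⟨j, k⟩ ⟨⟨-, huh, hn⟩, rfl⟩
        refine ⟨?_, ?_, hn, rfl⟩ <;> by_contra! h <;> exact huh (hsupp j k (by omega))
    _ ≤ 12 * (K : ℝ) ^ 2 / ((γ - γ') / 2) := by gcongr
    _ = 24 / (γ - γ') * (K : ℝ) ^ 2 := by field_simp; ring

/-- A Hölder-continuous function with one-sided spectrum (j ≥ 0, k ≥ 0) belongs to
H^{γ'} for every γ' < γ, with ‖u‖²_{H^{γ'}} ≤ c (γ − γ')⁻¹ ‖u‖²_{C^{0,γ}}. -/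
theorem stmt_4 :
    ∃ c > 0, ∀ γ γ' : ℝ, 0 < γ → γ ≤ 1 → 0 < γ' → γ' < γ →
      ∀ uh : ℤ × ℤ → ℂ,
        Summable (fun jk : ℤ × ℤ => ‖uh jk‖) →
        (∀ j k : ℤ, (j < 0 ∨ k < 0) → uh (j, k) = 0) →
        ∀ u : ℝ × ℝ → ℂ,
          (∀ x t : ℝ, u (x, t) = ∑' jk : ℤ × ℤ,
            uh jk * Complex.exp (Complex.I * (2 * jk.1 * x + jk.2 * t))) →
          ∀ K : NNReal, HolderWith K (Real.toNNReal γ) u →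
            Summable (fun jk : ℤ × ℤ =>
              ((2 * |jk.1| + |jk.2| : ℤ) : ℝ) ^ (2 * γ') * ‖uh jk‖ ^ 2) ∧
            ∑' jk : ℤ × ℤ, ((2 * |jk.1| + |jk.2| : ℤ) : ℝ) ^ (2 * γ') * ‖uh jk‖ ^ 2 ≤
              c / (γ - γ') * (K : ℝ) ^ 2 := by
  refine ⟨24, by norm_num, fun γ γ' _ hγ₁ hγ'₀ hγ' uh ha hsupp u hu K hK => ?_⟩
  simp only [cast_freqNorm]
  have hbound := sum_freqNorm_rpow_mul_norm_sq_le hγ₁ hγ'₀ hγ' uh ha hsupp u hu hK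
  have hsummable := summable_of_sum_le (fun jk => by positivity) hbound
  exact ⟨hsummable, hsummable.tsum_le_of_sum_le hbound⟩
end

section
/- Let 0 < s < 1 and A > 0. For every f in E^s, the low-frequency piece f_{1,A} = Σ_{2j≠±k, 2|j|+|k| ≤ A} f̂(j,k) e^{i2jx}e^{ikt} satisfies the uniform bound ‖f_{1,A}‖_{C⁰} ≤ c(s) A^{1−s} ‖f‖_{E^s}. -/
/-!
By Cauchy–Schwarz with the weights `|k² - 4j²|^(±s)`, the sup norm of the finite sum `f_{1,A}` is
at most `(∑ |k² - 4j²|^(-s))^(1/2) ‖f‖_{E^s}`, the sum running over `2j ≠ ±k`, `2|j| + |k| ≤ A`.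
The injective substitution `m = k - 2j`, `n = k + 2j` factors the weight as `|m|^(-s) |n|^(-s)`
with `0 < |m|, |n| ≤ A`, so this sum is at most `(∑_{0 < |m| ≤ A} |m|^(-s))²`, and telescoping the
concavity bound `(1 - s) n^(-s) ≤ n^(1-s) - (n - 1)^(1-s)` gives `∑_{0 < |m| ≤ A} |m|^(-s) ≤
2 A^(1-s) / (1 - s)`.
-/

open Real Complex

theorem mul_rpow_sub_one_le_rpow_sub_rpow {p x : ℝ} (hp0 : 0 ≤ p) (hp1 : p ≤ 1) (hx : 1 ≤ x) :
    p * x ^ (p - 1) ≤ x ^ p - (x - 1) ^ p := by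
  have hx0 : 0 < x := by linarith
  have bernoulli : (1 + -x⁻¹) ^ p ≤ 1 + p * -x⁻¹ :=
    rpow_one_add_le_one_add_mul_self (by simpa using inv_le_one_of_one_le₀ hx) hp0 hp1
  calc p * x ^ (p - 1) = x ^ p - x ^ p * (1 + p * -x⁻¹) := by
        rw [rpow_sub_one hx0.ne']; ring
    _ ≤ x ^ p - x ^ p * (1 + -x⁻¹) ^ p := by gcongr
    _ = x ^ p - (x - 1) ^ p := by
        rw [← mul_rpow hx0.le (by simpa using inv_le_one_of_one_le₀ hx)]
        congr 2
        field_simp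
        ring

theorem mul_sum_range_rpow_sub_one_le {p : ℝ} (hp0 : 0 ≤ p) (hp1 : p ≤ 1) (N : ℕ) :
    p * ∑ i ∈ Finset.range N, ((i : ℝ) + 1) ^ (p - 1) ≤ (N : ℝ) ^ p := by
  calc p * ∑ i ∈ Finset.range N, ((i : ℝ) + 1) ^ (p - 1)
      ≤ ∑ i ∈ Finset.range N, (((i + 1 : ℕ) : ℝ) ^ p - (i : ℝ) ^ p) := by
        rw [Finset.mul_sum]
        refine Finset.sum_le_sum fun i _ => ?_
        simpa using mul_rpow_sub_one_le_rpow_sub_rpow hp0 hp1 (x := (i : ℝ) + 1) (by simp)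
    _ = (N : ℝ) ^ p - (0 : ℝ) ^ p := by
        rw [Finset.sum_range_sub (fun i : ℕ => (i : ℝ) ^ p)]; simp
    _ ≤ (N : ℝ) ^ p := by linarith [rpow_nonneg (le_refl (0 : ℝ)) p]

theorem sum_abs_rpow_neg_le {s : ℝ} (hs0 : 0 ≤ s) (hs1 : s < 1) (N : ℕ) :
    ∑ m ∈ (Finset.Icc (-(N : ℤ)) N).erase 0, |(m : ℝ)| ^ (-s) ≤
      2 * (N : ℝ) ^ (1 - s) / (1 - s) := by
  set pos : Finset ℤ := (Finset.range N).image fun i : ℕ => (i : ℤ) + 1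
  have hsplit : (Finset.Icc (-(N : ℤ)) N).erase 0 = pos ∪ pos.image Neg.neg := by
    ext m
    simp only [pos, Finset.mem_erase, Finset.mem_Icc, Finset.mem_union, Finset.image_image,
      Finset.mem_image, Finset.mem_range, Function.comp_apply]
    constructor
    · rintro ⟨hm0, hm1, hm2⟩
      rcases lt_or_gt_of_ne hm0 with h | h
      · exact Or.inr ⟨(-m - 1).toNat, by omega, by omega⟩
      · exact Or.inl ⟨(m - 1).toNat, by omega, by omega⟩
    · rintro (⟨i, hi, rfl⟩ | ⟨i, hi, rfl⟩) <;> omega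
  have hdisj : Disjoint pos (pos.image Neg.neg) := by
    simp only [pos, Finset.disjoint_left, Finset.image_image, Finset.mem_image, Function.comp_apply]
    rintro _ ⟨i, _, rfl⟩ ⟨j, _, h⟩
    omega
  have hpos : ∑ m ∈ pos, |(m : ℝ)| ^ (-s) = ∑ i ∈ Finset.range N, ((i : ℝ) + 1) ^ (-s) := by
    rw [Finset.sum_image fun a _ b _ h => by simpa using h]
    push_cast
    exact Finset.sum_congr rfl fun i _ => by rw [abs_of_pos (by positivity)]
  have hneg : ∑ m ∈ pos.image Neg.neg, |(m : ℝ)| ^ (-s) = ∑ m ∈ pos, |(m : ℝ)| ^ (-s) := by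
    rw [Finset.sum_image fun a _ b _ h => neg_injective h]
    simp only [Int.cast_neg, abs_neg]
  have hsum := mul_sum_range_rpow_sub_one_le (p := 1 - s) (by linarith) (by linarith) N
  rw [sub_sub_cancel_left] at hsum
  rw [hsplit, Finset.sum_union hdisj, hneg, hpos, le_div_iff₀ (by linarith)]
  linarith

theorem norm_sum_le_sqrt_sum_inv_mul_sqrt_sum_mul {ι E : Type*} [SeminormedAddCommGroup E]
    (S : Finset ι) (w : ι → ℝ) (hw : ∀ i ∈ S, 0 < w i) (a : ι → E) :
    ‖∑ i ∈ S, a i‖ ≤ √(∑ i ∈ S, (w i)⁻¹) * √(∑ i ∈ S, w i * ‖a i‖ ^ 2) := by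
  calc ‖∑ i ∈ S, a i‖ ≤ ∑ i ∈ S, (√(w i))⁻¹ * (√(w i) * ‖a i‖) := by
        refine (norm_sum_le _ _).trans_eq (Finset.sum_congr rfl fun i hi => ?_)
        rw [← mul_assoc, inv_mul_cancel₀ (sqrt_pos.2 (hw i hi)).ne', one_mul]
    _ ≤ √(∑ i ∈ S, ((√(w i))⁻¹) ^ 2) * √(∑ i ∈ S, (√(w i) * ‖a i‖) ^ 2) :=
        sum_mul_le_sqrt_mul_sqrt _ _ _
    _ = √(∑ i ∈ S, (w i)⁻¹) * √(∑ i ∈ S, w i * ‖a i‖ ^ 2) := by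
        congr 2 <;> refine Finset.sum_congr rfl fun i hi => ?_
        · rw [inv_pow, sq_sqrt (hw i hi).le]
        · rw [mul_pow, sq_sqrt (hw i hi).le]

def IsLowFreq (N : ℕ) (jk : ℤ × ℤ) : Prop :=
  2 * jk.1 ≠ jk.2 ∧ 2 * jk.1 ≠ -jk.2 ∧ 2 * |jk.1| + |jk.2| ≤ N

theorem IsLowFreq.sq_sub_four_mul_sq_ne_zero {N : ℕ} {jk : ℤ × ℤ} (h : IsLowFreq N jk) :
    jk.2 ^ 2 - 4 * jk.1 ^ 2 ≠ 0 := by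
  obtain ⟨h1, h2, -⟩ := h
  rw [show jk.2 ^ 2 - 4 * jk.1 ^ 2 = (jk.2 - 2 * jk.1) * (jk.2 + 2 * jk.1) by ring]
  exact mul_ne_zero (by omega) (by omega)

theorem sum_abs_sq_sub_four_mul_sq_rpow_neg_le {s : ℝ} (hs0 : 0 ≤ s) (hs1 : s < 1) (N : ℕ)
    (S : Finset (ℤ × ℤ)) (hS : ∀ jk ∈ S, IsLowFreq N jk) :
    ∑ jk ∈ S, ((|jk.2 ^ 2 - 4 * jk.1 ^ 2| : ℤ) : ℝ) ^ (-s) ≤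
      (2 * (N : ℝ) ^ (1 - s) / (1 - s)) ^ 2 := by
  set T := (Finset.Icc (-(N : ℤ)) N).erase 0
  set φ : ℤ × ℤ → ℤ × ℤ := fun jk => (jk.2 - 2 * jk.1, jk.2 + 2 * jk.1)
  have hφ_inj : Set.InjOn φ S := by
    rintro ⟨j, k⟩ _ ⟨j', k'⟩ _ h
    simp only [φ, Prod.mk.injEq] at h
    ext <;> omega
  have hφ_maps : S.image φ ⊆ T ×ˢ T := by
    simp only [Finset.subset_iff, Finset.mem_image, Finset.mem_product, T, Finset.mem_erase,
      Finset.mem_Icc]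
    rintro _ ⟨⟨j, k⟩, hjk, rfl⟩
    have := hS _ hjk
    simp only [IsLowFreq, φ, Int.abs_eq_natAbs] at this ⊢
    omega
  have hfactor : ∀ jk : ℤ × ℤ, ((|jk.2 ^ 2 - 4 * jk.1 ^ 2| : ℤ) : ℝ) ^ (-s) =
      |((φ jk).1 : ℝ)| ^ (-s) * |((φ jk).2 : ℝ)| ^ (-s) := fun jk => by
    rw [← mul_rpow (abs_nonneg _) (abs_nonneg _), ← abs_mul]
    push_cast [φ]
    ring_nf
  calc ∑ jk ∈ S, ((|jk.2 ^ 2 - 4 * jk.1 ^ 2| : ℤ) : ℝ) ^ (-s)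
      = ∑ mn ∈ S.image φ, |(mn.1 : ℝ)| ^ (-s) * |(mn.2 : ℝ)| ^ (-s) := by
        rw [Finset.sum_image hφ_inj]; exact Finset.sum_congr rfl fun jk _ => hfactor jk
    _ ≤ ∑ mn ∈ T ×ˢ T, |(mn.1 : ℝ)| ^ (-s) * |(mn.2 : ℝ)| ^ (-s) :=
        Finset.sum_le_sum_of_subset_of_nonneg hφ_maps fun _ _ _ => by positivity
    _ = (∑ m ∈ T, |(m : ℝ)| ^ (-s)) ^ 2 := by rw [Finset.sum_product, sq, Finset.sum_mul_sum]
    _ ≤ (2 * (N : ℝ) ^ (1 - s) / (1 - s)) ^ 2 := by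
        gcongr
        exact sum_abs_rpow_neg_le hs0 hs1 N

theorem norm_sum_le_of_isLowFreq {E : Type*} [SeminormedAddCommGroup E] {s : ℝ} (hs0 : 0 ≤ s)
    (hs1 : s < 1) (N : ℕ) (S : Finset (ℤ × ℤ)) (hS : ∀ jk ∈ S, IsLowFreq N jk)
    (a : ℤ × ℤ → E) :
    ‖∑ jk ∈ S, a jk‖ ≤ 2 * (N : ℝ) ^ (1 - s) / (1 - s) *
      √(∑ jk ∈ S, ((|jk.2 ^ 2 - 4 * jk.1 ^ 2| : ℤ) : ℝ) ^ s * ‖a jk‖ ^ 2) := by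
  set w : ℤ × ℤ → ℝ := fun jk => ((|jk.2 ^ 2 - 4 * jk.1 ^ 2| : ℤ) : ℝ)
  have hw : ∀ jk ∈ S, 0 < w jk ^ s := fun jk hjk => by
    have := (hS jk hjk).sq_sub_four_mul_sq_ne_zero
    positivity
  have hcount : √(∑ jk ∈ S, (w jk ^ s)⁻¹) ≤ 2 * (N : ℝ) ^ (1 - s) / (1 - s) := by
    have hw0 : ∀ jk, 0 ≤ w jk := fun jk => by positivity
    simp only [← rpow_neg (hw0 _)]
    exact (sqrt_le_left (by bound)).2 (sum_abs_sq_sub_four_mul_sq_rpow_neg_le hs0 hs1 N S hS)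
  exact (norm_sum_le_sqrt_sum_inv_mul_sqrt_sum_mul S _ hw a).trans (by gcongr)

theorem exists_isLowFreq_tsum_ite_eq_sum {E : Type*} [AddCommMonoid E] [TopologicalSpace E]
    {A : ℝ} (hA : 0 ≤ A) (g : ℤ × ℤ → E) :
    ∃ S : Finset (ℤ × ℤ), (∀ jk ∈ S, IsLowFreq ⌊A⌋₊ jk) ∧
      (∑' jk : ℤ × ℤ, if 2 * jk.1 ≠ jk.2 ∧ 2 * jk.1 ≠ -jk.2 ∧
        ((2 * |jk.1| + |jk.2| : ℤ) : ℝ) ≤ A then g jk else 0) = ∑ jk ∈ S, g jk := by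
  set P : ℤ × ℤ → Prop :=
    fun jk => 2 * jk.1 ≠ jk.2 ∧ 2 * jk.1 ≠ -jk.2 ∧ ((2 * |jk.1| + |jk.2| : ℤ) : ℝ) ≤ A
  have hP : ∀ jk, P jk → IsLowFreq ⌊A⌋₊ jk := by
    rintro jk ⟨h1, h2, hA'⟩
    refine ⟨h1, h2, ?_⟩
    rw [Int.natCast_floor_eq_floor hA]
    exact Int.le_floor.2 hA'
  set N := ⌊A⌋₊
  refine ⟨(Finset.Icc (-(N : ℤ)) N ×ˢ Finset.Icc (-(N : ℤ)) N).filter P,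
    fun jk hjk => hP jk (Finset.mem_filter.1 hjk).2, ?_⟩
  rw [Finset.sum_filter]
  refine tsum_eq_sum fun jk hjk => if_neg fun hPjk => hjk ?_
  have := hP jk hPjk
  simp only [IsLowFreq, Finset.mem_product, Finset.mem_Icc, Int.abs_eq_natAbs] at this ⊢
  omega

/-- Bernstein-type bound for the low-frequency truncation:
‖f_{1,A}‖_{C⁰} ≤ c(s) A^{1−s} ‖f‖_{E^s}. -/
theorem stmt_7 (s : ℝ) (hs0 : 0 < s) (hs1 : s < 1) :
    ∃ c > 0, ∀ A : ℝ, 0 < A → ∀ fh : ℤ × ℤ → ℂ,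
      (∀ j k : ℤ, (2 * j = k ∨ 2 * j = -k) → fh (j, k) = 0) →
      Summable (fun jk : ℤ × ℤ =>
        ((|jk.2 ^ 2 - 4 * jk.1 ^ 2| : ℤ) : ℝ) ^ s * ‖fh jk‖ ^ 2) →
      ∀ x t : ℝ,
        ‖∑' jk : ℤ × ℤ,
          if 2 * jk.1 ≠ jk.2 ∧ 2 * jk.1 ≠ -jk.2 ∧ ((2 * |jk.1| + |jk.2| : ℤ) : ℝ) ≤ A then
            fh jk * Complex.exp (Complex.I * (2 * jk.1 * x + jk.2 * t))
          else 0‖ ≤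
        c * A ^ (1 - s) * Real.sqrt (∑' jk : ℤ × ℤ,
          ((|jk.2 ^ 2 - 4 * jk.1 ^ 2| : ℤ) : ℝ) ^ s * ‖fh jk‖ ^ 2) := by
  refine ⟨2 / (1 - s), by bound, fun A hA fh _ hsum x t => ?_⟩
  obtain ⟨S, hS, htsum⟩ := exists_isLowFreq_tsum_ite_eq_sum hA.le
    fun jk : ℤ × ℤ => fh jk * Complex.exp (Complex.I * (2 * jk.1 * x + jk.2 * t))
  have hexp : ∀ jk : ℤ × ℤ, ‖Complex.exp (Complex.I * (2 * jk.1 * x + jk.2 * t))‖ = 1 :=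
    fun jk => by simpa using norm_exp_I_mul_ofReal (2 * jk.1 * x + jk.2 * t)
  rw [htsum]
  calc _ ≤ 2 * (⌊A⌋₊ : ℝ) ^ (1 - s) / (1 - s) *
        √(∑ jk ∈ S, ((|jk.2 ^ 2 - 4 * jk.1 ^ 2| : ℤ) : ℝ) ^ s * ‖fh jk‖ ^ 2) := by
        simpa only [norm_mul, hexp, mul_one] using norm_sum_le_of_isLowFreq hs0.le hs1 _ S hS
          fun jk : ℤ × ℤ => fh jk * Complex.exp (Complex.I * (2 * jk.1 * x + jk.2 * t))
    _ ≤ 2 / (1 - s) * A ^ (1 - s) *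
        √(∑' jk : ℤ × ℤ, ((|jk.2 ^ 2 - 4 * jk.1 ^ 2| : ℤ) : ℝ) ^ s * ‖fh jk‖ ^ 2) := by
        rw [mul_div_right_comm]
        gcongr
        · exact Nat.floor_le hA.le
        · exact hsum.sum_le_tsum S fun _ _ => by positivity
end

section
/- Suppose F: ℝ → ℝ satisfies F(0)=0, F' = f, and c₀¹|u|^{s−1}u + c₁¹ ≤ f(u) ≤ c₀²|u|^{s−1}u + c₂¹ with s > 1, c₀¹ > c₀²/(s+1) > 0. Then there exist constants a₁ > 0 and a₂ ≥ 0 such that for all u ∈ ℝ, (1/2)u f(u) − F(u) ≥ a₁|u|^{s+1} − a₂. -/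
/-!
Both growth bounds hold for `u` of either sign, so `(c01 - c02) |u|^(s-1) u` is bounded above,
which forces `c01 = c02 =: c`. Then `f = c |u|^(s-1) u + g` with `g` bounded, and
`F = c |u|^(s+1) / (s+1) + G` with `G(0) = 0` and `G` Lipschitz, so
`(1/2) u f(u) - F(u) = c (1/2 - 1/(s+1)) |u|^(s+1) + O(|u|)`; the coefficient is positive as
`s > 1`, and the linear error is absorbed into half of the leading term since `s + 1 > 1`.
-/

open Real Filter Set

lemma abs_rpow_sub_one_mul_self_mul_self {s : ℝ} (hs : s + 1 ≠ 0) (u : ℝ) :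
    |u| ^ (s - 1) * u * u = |u| ^ (s + 1) := by
  rcases eq_or_ne u 0 with rfl | hu
  · simp [zero_rpow hs]
  · have hu' : |u| ≠ 0 := abs_ne_zero.2 hu
    rw [mul_assoc, ← abs_mul_abs_self u, ← mul_assoc, ← rpow_add_one hu',
      ← rpow_add_one hu']
    ring_nf

lemma tendsto_abs_rpow_sub_one_mul_self_atTop {s : ℝ} (hs : 0 < s) :
    Tendsto (fun u : ℝ => |u| ^ (s - 1) * u) atTop atTop := by
  refine (tendsto_rpow_atTop hs).congr' ?_
  filter_upwards [eventually_gt_atTop 0] with u hu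
  rw [abs_of_pos hu, ← rpow_add_one hu.ne', sub_add_cancel]

lemma eq_zero_of_forall_mul_abs_rpow_sub_one_mul_self_le {s a C : ℝ} (hs : 0 < s)
    (h : ∀ u : ℝ, a * (|u| ^ (s - 1) * u) ≤ C) : a = 0 := by
  have hφ := tendsto_abs_rpow_sub_one_mul_self_atTop hs
  rcases lt_trichotomy a 0 with ha | ha | ha
  · have hneg : Tendsto (fun u : ℝ => -a * (|u| ^ (s - 1) * u)) atTop atTop :=
      hφ.const_mul_atTop (neg_pos.2 ha)
    obtain ⟨u, hu⟩ := (hneg.eventually_gt_atTop C).exists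
    have := h (-u)
    rw [abs_neg] at this
    linarith
  · exact ha
  · obtain ⟨u, hu⟩ := ((hφ.const_mul_atTop ha).eventually_gt_atTop C).exists
    linarith [h u]

lemma exists_forall_mul_le_mul_rpow_add {p ε : ℝ} (hp : 1 < p) (hε : 0 < ε) (M : ℝ) :
    ∃ C, ∀ x : ℝ, 0 ≤ x → M * x ≤ ε * x ^ p + C := by
  obtain ⟨R, hR⟩ := eventually_atTop.1 <| (eventually_gt_atTop 0).and
    (((tendsto_rpow_atTop (sub_pos.2 hp)).const_mul_atTop hε).eventually_ge_atTop M)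
  refine ⟨|M| * |R|, fun x hx => ?_⟩
  have hxp : 0 ≤ ε * x ^ p := by positivity
  rcases le_or_gt x R with hxR | hRx
  · have : M * x ≤ |M| * |R| :=
      calc M * x ≤ |M| * x := mul_le_mul_of_nonneg_right (le_abs_self M) hx
        _ ≤ |M| * |R| := mul_le_mul_of_nonneg_left (hxR.trans (le_abs_self R)) (abs_nonneg M)
    linarith
  · obtain ⟨hx, hMx⟩ := hR x hRx.le
    have := mul_le_mul_of_nonneg_right hMx hx.le
    rw [mul_assoc, ← rpow_add_one hx.ne', sub_add_cancel] at this
    linarith [mul_nonneg (abs_nonneg M) (abs_nonneg R)]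

lemma abs_le_mul_abs_of_hasDerivAt {G g : ℝ → ℝ} {K : ℝ} (hG0 : G 0 = 0)
    (hG : ∀ u, HasDerivAt G (g u) u) (hg : ∀ u, |g u| ≤ K) (u : ℝ) : |G u| ≤ K * |u| := by
  simpa [hG0] using convex_univ.norm_image_sub_le_of_norm_hasDerivWithin_le
    (fun x _ => (hG x).hasDerivWithinAt) (fun x _ => hg x) (mem_univ 0) (mem_univ u)

lemma hasDerivAt_abs_rpow_add_one_div {s : ℝ} (hs : 0 < s) (u : ℝ) :
    HasDerivAt (fun x : ℝ => |x| ^ (s + 1) / (s + 1)) (|u| ^ (s - 1) * u) u := by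
  refine ((hasDerivAt_abs_rpow u (by linarith : 1 < s + 1)).div_const (s + 1)).congr_deriv ?_
  rw [show s + 1 - 2 = s - 1 by ring]
  field_simp

theorem exists_superquadratic_bound {s c K : ℝ} (hs : 1 < s) (hc : 0 < c) {f F : ℝ → ℝ}
    (hF0 : F 0 = 0) (hF : ∀ u, HasDerivAt F (f u) u)
    (hf : ∀ u, |f u - c * (|u| ^ (s - 1) * u)| ≤ K) :
    ∃ a₁ a₂ : ℝ, 0 < a₁ ∧ 0 ≤ a₂ ∧
      ∀ u : ℝ, a₁ * |u| ^ (s + 1) - a₂ ≤ (1 / 2) * u * f u - F u := by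
  have hs1 : s + 1 ≠ 0 := by linarith
  set G : ℝ → ℝ := fun x => F x - c * (|x| ^ (s + 1) / (s + 1))
  have hG : ∀ u, HasDerivAt G (f u - c * (|u| ^ (s - 1) * u)) u := fun u =>
    (hF u).sub ((hasDerivAt_abs_rpow_add_one_div (by linarith) u).const_mul c)
  have hGle := abs_le_mul_abs_of_hasDerivAt (by simp [G, hF0, zero_rpow hs1]) hG hf
  set b := c * (1 / 2 - 1 / (s + 1))
  have hb : 0 < b := mul_pos hc (by rw [sub_pos]; gcongr; linarith)
  obtain ⟨C, hC⟩ := exists_forall_mul_le_mul_rpow_add (by linarith : 1 < s + 1) (half_pos hb)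
    (3 / 2 * K)
  refine ⟨b / 2, max C 0, half_pos hb, le_max_right _ _, fun u => ?_⟩
  have hsplit : (1 / 2) * u * f u - F u
      = b * |u| ^ (s + 1) + (1 / 2) * u * (f u - c * (|u| ^ (s - 1) * u)) - G u := by
    simp only [G, b, ← abs_rpow_sub_one_mul_self_mul_self hs1 u]
    field_simp
    ring
  have hperturb : |(1 / 2) * u * (f u - c * (|u| ^ (s - 1) * u))| ≤ 1 / 2 * K * |u| := by
    rw [abs_mul, abs_mul, abs_of_pos one_half_pos]
    nlinarith [hf u, abs_nonneg u]
  rw [hsplit]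
  linarith [hC |u| (abs_nonneg u), (le_abs_self (G u)).trans (hGle u), le_max_left C 0,
    (neg_abs_le _).trans' (neg_le_neg hperturb)]

theorem stmt_13_general (s c01 c02 c11 c21 : ℝ) (hs : 1 < s)
    (hquot : 0 < c02 / (s + 1))
    (f F : ℝ → ℝ) (hF0 : F 0 = 0) (hF : ∀ u : ℝ, HasDerivAt F (f u) u)
    (hlow : ∀ u : ℝ, c01 * |u| ^ (s - 1) * u + c11 ≤ f u)
    (hup : ∀ u : ℝ, f u ≤ c02 * |u| ^ (s - 1) * u + c21) :
    ∃ a₁ a₂ : ℝ, 0 < a₁ ∧ 0 ≤ a₂ ∧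
      ∀ u : ℝ, a₁ * |u| ^ (s + 1) - a₂ ≤ (1 / 2) * u * f u - F u := by
  have hc02 : 0 < c02 := (div_pos_iff_of_pos_right (by linarith)).1 hquot
  have hc : c01 - c02 = 0 :=
    eq_zero_of_forall_mul_abs_rpow_sub_one_mul_self_le (s := s) (C := c21 - c11) (by linarith)
      fun u => by linarith [hlow u, hup u]
  obtain rfl : c01 = c02 := sub_eq_zero.1 hc
  refine exists_superquadratic_bound (K := max |c11| |c21|) hs hc02 hF0 hF fun u =>
    abs_le.2 ⟨?_, ?_⟩
  · linarith [hlow u, neg_abs_le c11, le_max_left |c11| |c21|]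
  · linarith [hup u, le_abs_self c21, le_max_right |c11| |c21|]

/-- Superquadraticity: under the growth conditions on f = F', there are a₁ > 0, a₂ ≥ 0
with (1/2) u f(u) − F(u) ≥ a₁ |u|^{s+1} − a₂ for all u. -/
theorem stmt_13 (s c01 c02 c11 c21 : ℝ) (hs : 1 < s)
    (hquot : 0 < c02 / (s + 1)) (hcc : c02 / (s + 1) < c01)
    (f F : ℝ → ℝ) (hF0 : F 0 = 0) (hF : ∀ u : ℝ, HasDerivAt F (f u) u)
    (hlow : ∀ u : ℝ, c01 * |u| ^ (s - 1) * u + c11 ≤ f u)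
    (hup : ∀ u : ℝ, f u ≤ c02 * |u| ^ (s - 1) * u + c21) :
    ∃ a₁ a₂ : ℝ, 0 < a₁ ∧ 0 ≤ a₂ ∧
      ∀ u : ℝ, a₁ * |u| ^ (s + 1) - a₂ ≤ (1 / 2) * u * f u - F u :=
  stmt_13_general s c01 c02 c11 c21 hs hquot f F hF0 hF hlow hup
end
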